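/- The post-selected event of the Frauchiger–Renner paradox has probability 1/12: let ψ^{t=2} = (e₀⊗e₀⊗e₀⊗e₀ + e₁⊗e₁⊗e₀⊗e₀ + e₁⊗e₁⊗e₁⊗e₁)/√3 in EuclideanSpace ℂ ((Fin 2 × Fin 2) × (Fin 2 × Fin 2)) (tensor factors ordered S_A, L_A, S_B, L_B), and let ok = (e₀⊗e₀ − e₁⊗e₁)/√2 in EuclideanSpace ℂ (Fin 2 × Fin 2). Then ⟪ok⊗ok, ψ^{t=2}⟫ = 1/(2√3), and hence the Born probability |⟪ok⊗ok, ψ^{t=2}⟫|² = 1/12 > 0. -/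

import Mathlib

open scoped InnerProductSpace

noncomputable section

/-- Standard basis vectors `e₀, e₁` of `ℂ²`. -/
def e (a : Fin 2) : EuclideanSpace ℂ (Fin 2) := EuclideanSpace.single a 1

/-- Twofold product vector: `(eₐ⊗e_b)(j,k) = eₐ(j)·e_b(k)`. -/
def tp2 (φ χ : EuclideanSpace ℂ (Fin 2)) :
    EuclideanSpace ℂ (Fin 2 × Fin 2) :=
  WithLp.toLp 2 (fun p => φ p.1 * χ p.2)

/-- Product of two two-qubit vectors:
`(φ⊗χ)((j,k),(l,m)) = φ(j,k)·χ(l,m)`. -/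
def tpPair (φ χ : EuclideanSpace ℂ (Fin 2 × Fin 2)) :
    EuclideanSpace ℂ ((Fin 2 × Fin 2) × (Fin 2 × Fin 2)) :=
  WithLp.toLp 2 (fun p => φ p.1 * χ p.2)

/-- State of the Frauchiger–Renner protocol after the friends' measurements
are modelled unitarily (tensor factors ordered `S_A, L_A, S_B, L_B`). -/
def ψt2 : EuclideanSpace ℂ ((Fin 2 × Fin 2) × (Fin 2 × Fin 2)) :=
  (Real.sqrt 3 : ℂ)⁻¹ •
    (tpPair (tp2 (e 0) (e 0)) (tp2 (e 0) (e 0)) +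
      tpPair (tp2 (e 1) (e 1)) (tp2 (e 0) (e 0)) +
      tpPair (tp2 (e 1) (e 1)) (tp2 (e 1) (e 1)))

/-- The superobservers' supermeasurement basis vector
`ok = (e₀⊗e₀ − e₁⊗e₁)/√2`. -/
def ok : EuclideanSpace ℂ (Fin 2 × Fin 2) :=
  (Real.sqrt 2 : ℂ)⁻¹ • (tp2 (e 0) (e 0) - tp2 (e 1) (e 1))

/-!
The inner product of product vectors factorises, `⟪φ ⊗ χ, φ' ⊗ χ'⟫ = ⟪φ, φ'⟫ ⟪χ, χ'⟫`, and
`⟪ok, e₀ ⊗ e₀⟫ = 1/√2`, `⟪ok, e₁ ⊗ e₁⟫ = -1/√2`. Hence the three branches of `ψ^{t=2}` contribute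
`1/2`, `-1/2` and `1/2` to `√3 ⟪ok ⊗ ok, ψ^{t=2}⟫`: the first two cancel and the amplitude is
`1/(2√3)`.
-/

theorem inner_toLp_prod_mul {𝕜 ι κ : Type*} [RCLike 𝕜] [Fintype ι] [Fintype κ]
    (φ φ' : EuclideanSpace 𝕜 ι) (χ χ' : EuclideanSpace 𝕜 κ) :
    ⟪(WithLp.toLp 2 (fun p : ι × κ => φ p.1 * χ p.2) : EuclideanSpace 𝕜 (ι × κ)),
      WithLp.toLp 2 (fun p : ι × κ => φ' p.1 * χ' p.2)⟫_𝕜 = ⟪φ, φ'⟫_𝕜 * ⟪χ, χ'⟫_𝕜 := by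
  simp only [PiLp.inner_apply, Fintype.sum_prod_type, Finset.sum_mul_sum, RCLike.inner_apply,
    map_mul]
  refine Finset.sum_congr rfl fun _ _ => Finset.sum_congr rfl fun _ _ => ?_
  ring

theorem inner_tp2 (φ φ' χ χ' : EuclideanSpace ℂ (Fin 2)) :
    ⟪tp2 φ χ, tp2 φ' χ'⟫_ℂ = ⟪φ, φ'⟫_ℂ * ⟪χ, χ'⟫_ℂ :=
  inner_toLp_prod_mul φ φ' χ χ'

theorem inner_tpPair (φ φ' χ χ' : EuclideanSpace ℂ (Fin 2 × Fin 2)) :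
    ⟪tpPair φ χ, tpPair φ' χ'⟫_ℂ = ⟪φ, φ'⟫_ℂ * ⟪χ, χ'⟫_ℂ :=
  inner_toLp_prod_mul φ φ' χ χ'

theorem inner_e_e (a b : Fin 2) : ⟪e a, e b⟫_ℂ = if a = b then 1 else 0 := by
  simp [e, EuclideanSpace.inner_single_left]

theorem inner_ok_tp2_e_zero : ⟪ok, tp2 (e 0) (e 0)⟫_ℂ = 1 / Real.sqrt 2 := by
  rw [ok, inner_smul_left, inner_sub_left, inner_tp2, inner_tp2, inner_e_e, inner_e_e]
  simp [div_eq_inv_mul]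

theorem inner_ok_tp2_e_one : ⟪ok, tp2 (e 1) (e 1)⟫_ℂ = -1 / Real.sqrt 2 := by
  rw [ok, inner_smul_left, inner_sub_left, inner_tp2, inner_tp2, inner_e_e, inner_e_e]
  simp [div_eq_inv_mul]

theorem inner_tpPair_ok_ok_ψt2 : ⟪tpPair ok ok, ψt2⟫_ℂ = 1 / (2 * Real.sqrt 3) := by
  have half : ((Real.sqrt 2 : ℂ))⁻¹ ^ 2 = 1 / 2 := by
    rw [inv_pow, ← Complex.ofReal_pow, Real.sq_sqrt zero_le_two]
    norm_num
  simp only [ψt2, inner_smul_right, inner_add_right, inner_tpPair, inner_ok_tp2_e_zero,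
    inner_ok_tp2_e_one]
  linear_combination ((Real.sqrt 3 : ℂ))⁻¹ * half

theorem norm_one_div_two_mul_sqrt_three_sq : ‖(1 / (2 * Real.sqrt 3) : ℂ)‖ ^ 2 = 1 / 12 := by
  rw [norm_div, norm_mul, Complex.norm_real, Real.norm_of_nonneg (Real.sqrt_nonneg 3)]
  norm_num [div_pow, mul_pow]

/-- The post-selected event of the Frauchiger–Renner paradox (both
superobservers obtain `ok`) has amplitude `1/(2√3)` and hence Born
probability `1/12 > 0`. -/
theorem fr_postselection_probability :
    ⟪tpPair ok ok, ψt2⟫_ℂ = 1 / (2 * Real.sqrt 3) ∧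
    ‖⟪tpPair ok ok, ψt2⟫_ℂ‖ ^ 2 = 1 / 12 ∧
    0 < ‖⟪tpPair ok ok, ψt2⟫_ℂ‖ ^ 2 := by
  rw [inner_tpPair_ok_ok_ψt2, norm_one_div_two_mul_sqrt_three_sq]
  norm_num
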